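/- Let d ≥ 1 be an integer, σ > 0, ω ∈ ℝ and λ ∈ ℝ. Let u : ℝ^d → ℝ be of class C² with u ∈ L²(ℝ^d), |∇u| ∈ L²(ℝ^d), Δu ∈ L²(ℝ^d), 0 < ∫_{ℝ^d} |u|^{2σ+2} dx < ∞, and ∫_{ℝ^d} u² dx > 0. If −Δu(x) + ω u(x) − μ[u] |u(x)|^{2σ} u(x) − (λ/4) (∫_{ℝ^d} |u|^{2σ+2} dx)^{1/(σ+1)} u(x) = 0 for every x ∈ ℝ^d, then λ = 0. -/

import Mathlib

open MeasureTheory Set Filter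

noncomputable section

/-- Laplacian as the sum of second directional derivatives along the standard basis. -/
def lapl {d : ℕ} (w : EuclideanSpace ℝ (Fin d) → ℝ) (x : EuclideanSpace ℝ (Fin d)) : ℝ :=
  ∑ i : Fin d, fderiv ℝ (fun y => fderiv ℝ w y (EuclideanSpace.single i 1)) x
    (EuclideanSpace.single i 1)

/-- The nonlocal coefficient `μ[w]` on the whole space `ℝ^d`. -/
def muR (d : ℕ) (σ ω : ℝ) (w : EuclideanSpace ℝ (Fin d) → ℝ) : ℝ :=
  ((∫ x, ‖fderiv ℝ w x‖ ^ 2) + ω * ∫ x, (w x) ^ 2) / ∫ x, |w x| ^ (2 * σ + 2)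

/-- The functional `F[w]` on the whole space `ℝ^d`. -/
def FR (d : ℕ) (σ ω : ℝ) (w : EuclideanSpace ℝ (Fin d) → ℝ) : ℝ :=
  ((∫ x, ‖fderiv ℝ w x‖ ^ 2) + ω * ∫ x, (w x) ^ 2) /
    (∫ x, |w x| ^ (2 * σ + 2)) ^ (1 / (σ + 1))

/-!
Multiplying the equation by `u` and integrating, the definition of `μ[u]` makes the gradient,
mass and nonlinear terms cancel as soon as `∫ u Δu = -∫ |∇u|²`; what remains is
`(λ/4) ‖u‖²_{2σ+2} ∫ u² = 0`. That integration by parts on the whole space is justified through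
`div (u ∇u) = u Δu + |∇u|²`: the identity holds against compactly supported test functions, both
`u ∇u` and `u Δu + |∇u|²` are integrable, and the cutoffs `θ(x/(n+1))` together with dominated
convergence give `∫ div (u ∇u) = 0`. Only `Δu`, not each `∂ᵢ²u`, is known to be square
integrable, so the sum over directions has to be formed before the cutoff is removed.
-/

open Topology InnerProductSpace
open scoped Gradient

section WholeSpace

variable {E : Type*} [NormedAddCommGroup E] [NormedSpace ℝ E] [FiniteDimensional ℝ E]

variable (E) in
theorem exists_seq_cutoff :
    ∃ χ : ℕ → E → ℝ, ∃ C : ℝ, (∀ n, ContDiff ℝ 1 (χ n)) ∧ (∀ n, HasCompactSupport (χ n)) ∧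
      (∀ n x, ‖χ n x‖ ≤ 1) ∧ (∀ n x, ‖fderiv ℝ (χ n) x‖ ≤ C) ∧
      ∀ x, ∀ᶠ n in atTop, χ n =ᶠ[𝓝 x] 1 := by
  let θ : ContDiffBump (0 : E) := ⟨1, 2, one_pos, one_lt_two⟩
  have hθ : ContDiff ℝ 1 θ := θ.contDiff
  obtain ⟨C, hC⟩ := (θ.hasCompactSupport.fderiv (𝕜 := ℝ)).exists_bound_of_continuous
    (hθ.continuous_fderiv one_ne_zero)
  have hscale : ∀ n : ℕ, ((n : ℝ) + 1)⁻¹ ≠ 0 := fun n => by positivity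
  refine ⟨fun n x => θ (((n : ℝ) + 1)⁻¹ • x), C, fun n => hθ.comp (contDiff_const_smul _),
    fun n => θ.hasCompactSupport.comp_smul (hscale n), fun n x => ?_, fun n x => ?_, fun x => ?_⟩
  · rw [Real.norm_of_nonneg θ.nonneg]
    exact θ.le_one
  · rw [fderiv_comp_smul, norm_smul]
    have : ‖((n : ℝ) + 1)⁻¹‖ ≤ 1 := by
      rw [norm_inv, Real.norm_of_nonneg (by positivity)]
      exact inv_le_one_of_one_le₀ (by simp)
    calc _ ≤ 1 * C := mul_le_mul this (hC _) (norm_nonneg _) zero_le_one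
      _ = C := one_mul C
  · filter_upwards [tendsto_natCast_atTop_atTop.eventually_ge_atTop ‖x‖] with n hn
    filter_upwards [Metric.ball_mem_nhds x one_pos] with y hy
    apply θ.one_of_mem_closedBall
    rw [mem_closedBall_zero_iff, norm_smul, norm_inv, Real.norm_of_nonneg (by positivity),
      inv_mul_le_one₀ (by positivity)]
    linarith [norm_le_norm_add_norm_sub' y x, (mem_ball_iff_norm.1 hy).le]

variable [MeasurableSpace E] [BorelSpace E] {μ : Measure E}

theorem integral_eq_zero_of_forall_integral_mul_eq_neg {g : E → ℝ} {F : E → E}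
    (hg : Integrable g μ) (hF : Integrable F μ)
    (h : ∀ φ : E → ℝ, ContDiff ℝ 1 φ → HasCompactSupport φ →
      ∫ x, φ x * g x ∂μ = -∫ x, fderiv ℝ φ x (F x) ∂μ) :
    ∫ x, g x ∂μ = 0 := by
  obtain ⟨χ, C, hχ, hχc, hχ_le, hdχ_le, hχ_eq⟩ := exists_seq_cutoff E
  have hlim : Tendsto (fun n => ∫ x, χ n x * g x ∂μ) atTop (𝓝 (∫ x, g x ∂μ)) := by
    refine tendsto_integral_of_dominated_convergence (fun x => ‖g x‖)
      (fun n => (hχ n).continuous.aestronglyMeasurable.mul hg.aestronglyMeasurable) hg.norm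
      (fun n => ae_of_all _ fun x => ?_) (ae_of_all _ fun x => ?_)
    · rw [norm_mul]
      exact mul_le_of_le_one_left (norm_nonneg _) (hχ_le n x)
    · refine tendsto_const_nhds.congr' ?_
      filter_upwards [hχ_eq x] with n hn
      rw [hn.eq_of_nhds, Pi.one_apply, one_mul]
  have hlim' : Tendsto (fun n => ∫ x, fderiv ℝ (χ n) x (F x) ∂μ) atTop (𝓝 (∫ _, 0 ∂μ)) := by
    refine tendsto_integral_of_dominated_convergence (fun x => C * ‖F x‖)
      (fun n => (ContinuousLinearMap.id ℝ (E →L[ℝ] ℝ)).aestronglyMeasurable_comp₂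
        ((hχ n).continuous_fderiv one_ne_zero).aestronglyMeasurable hF.aestronglyMeasurable)
      (hF.norm.const_mul C) (fun n => ae_of_all _ fun x => ?_) (ae_of_all _ fun x => ?_)
    · exact ((fderiv ℝ (χ n) x).le_opNorm _).trans
        (mul_le_mul_of_nonneg_right (hdχ_le n x) (norm_nonneg _))
    · refine tendsto_const_nhds.congr' ?_
      filter_upwards [hχ_eq x] with n hn
      rw [hn.fderiv_eq, fderiv_one]
      rfl
  rw [integral_zero] at hlim'
  refine tendsto_nhds_unique hlim ?_
  simpa only [h _ (hχ _) (hχc _), neg_zero] using hlim'.neg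

theorem integral_mul_fderiv_eq_neg_fderiv_mul_of_hasCompactSupport [μ.IsAddHaarMeasure]
    {φ g : E → ℝ} (hφ : ContDiff ℝ 1 φ) (hφc : HasCompactSupport φ) (hg : ContDiff ℝ 1 g)
    (v : E) :
    ∫ x, φ x * fderiv ℝ g x v ∂μ = -∫ x, fderiv ℝ φ x v * g x ∂μ := by
  have hdφ : Continuous fun x => fderiv ℝ φ x v :=
    (hφ.continuous_fderiv one_ne_zero).clm_apply continuous_const
  have hdg : Continuous fun x => fderiv ℝ g x v :=
    (hg.continuous_fderiv one_ne_zero).clm_apply continuous_const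
  exact integral_mul_fderiv_eq_neg_fderiv_mul_of_integrable
    ((hdφ.mul hg.continuous).integrable_of_hasCompactSupport
      (hφc.fderiv_apply (𝕜 := ℝ) v).mul_right)
    ((hφ.continuous.mul hdg).integrable_of_hasCompactSupport hφc.mul_right)
    ((hφ.continuous.mul hg.continuous).integrable_of_hasCompactSupport hφc.mul_right)
    (fun x _ => (hφ.differentiable one_ne_zero) x) (fun x _ => (hg.differentiable one_ne_zero) x)

end WholeSpace

section Euclidean

variable {ι : Type*} [Fintype ι] [DecidableEq ι]

theorem EuclideanSpace.apply_toDual_symm_eq_sum (L M : EuclideanSpace ℝ ι →L[ℝ] ℝ) :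
    L ((toDual ℝ _).symm M) =
      ∑ i, L (EuclideanSpace.single i 1) * M (EuclideanSpace.single i 1) := by
  set b := EuclideanSpace.basisFun ι ℝ
  conv_lhs => rw [← b.sum_repr' ((toDual ℝ _).symm M)]
  simp only [map_sum, map_smul, smul_eq_mul, b, EuclideanSpace.basisFun_apply]
  refine Finset.sum_congr rfl fun i _ => ?_
  rw [real_inner_comm, toDual_symm_apply, mul_comm]

theorem EuclideanSpace.norm_sq_eq_sum_sq_apply_single (M : EuclideanSpace ℝ ι →L[ℝ] ℝ) :
    ‖M‖ ^ 2 = ∑ i, M (EuclideanSpace.single i 1) ^ 2 := by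
  have : ‖M‖ ^ 2 = M ((toDual ℝ _).symm M) := by
    rw [← toDual_symm_apply, real_inner_self_eq_norm_sq, LinearIsometryEquiv.norm_map]
  simp only [this, apply_toDual_symm_eq_sum, sq]

end Euclidean

section Laplacian

variable {d : ℕ} {u : EuclideanSpace ℝ (Fin d) → ℝ}

theorem integral_mul_mul_lapl_add_norm_fderiv_sq {φ : EuclideanSpace ℝ (Fin d) → ℝ}
    (hu : ContDiff ℝ 2 u) (hφ : ContDiff ℝ 1 φ) (hφc : HasCompactSupport φ) :
    ∫ x, φ x * (u x * lapl u x + ‖fderiv ℝ u x‖ ^ 2) = -∫ x, fderiv ℝ φ x (u x • ∇ u x) := by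
  set e : Fin d → EuclideanSpace ℝ (Fin d) := fun i => EuclideanSpace.single i 1
  have hdu : ∀ i, ContDiff ℝ 1 fun y => fderiv ℝ u y (e i) := fun i =>
    (hu.fderiv_right le_rfl).clm_apply contDiff_const
  have hflux : ∀ i, ContDiff ℝ 1 fun y => u y * fderiv ℝ u y (e i) := fun i =>
    (hu.of_le one_le_two).mul (hdu i)
  have hdiv : ∀ x, u x * lapl u x + ‖fderiv ℝ u x‖ ^ 2 =
      ∑ i, fderiv ℝ (fun y => u y * fderiv ℝ u y (e i)) x (e i) := by
    intro x
    simp only [lapl, EuclideanSpace.norm_sq_eq_sum_sq_apply_single, Finset.mul_sum,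
      ← Finset.sum_add_distrib]
    refine Finset.sum_congr rfl fun i _ => ?_
    rw [fderiv_fun_mul (hu.differentiable two_ne_zero x) ((hdu i).differentiable one_ne_zero x)]
    simp only [add_apply, smul_apply, smul_eq_mul]
    ring
  have hpair : ∀ x, fderiv ℝ φ x (u x • ∇ u x) =
      ∑ i, fderiv ℝ φ x (e i) * (u x * fderiv ℝ u x (e i)) := by
    intro x
    rw [map_smul, gradient, EuclideanSpace.apply_toDual_symm_eq_sum, smul_eq_mul, Finset.mul_sum]
    exact Finset.sum_congr rfl fun i _ => by ring
  have hdiv_int : ∀ i,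
      Integrable fun x => φ x * fderiv ℝ (fun y => u y * fderiv ℝ u y (e i)) x (e i) :=
    fun i => (hφ.continuous.mul (((hflux i).continuous_fderiv one_ne_zero).clm_apply
      continuous_const)).integrable_of_hasCompactSupport hφc.mul_right
  have hpair_int : ∀ i, Integrable fun x => fderiv ℝ φ x (e i) * (u x * fderiv ℝ u x (e i)) :=
    fun i => (((hφ.continuous_fderiv one_ne_zero).clm_apply continuous_const).mul
      (hflux i).continuous).integrable_of_hasCompactSupport (hφc.fderiv_apply (𝕜 := ℝ) _).mul_right
  simp_rw [hdiv, hpair, Finset.mul_sum]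
  rw [integral_finsetSum _ fun i _ => hdiv_int i, integral_finsetSum _ fun i _ => hpair_int i,
    ← Finset.sum_neg_distrib]
  exact Finset.sum_congr rfl fun i _ =>
    integral_mul_fderiv_eq_neg_fderiv_mul_of_hasCompactSupport hφ hφc (hflux i) (e i)

theorem integral_mul_lapl_eq_neg_integral_norm_fderiv_sq (hu : ContDiff ℝ 2 u)
    (hL2 : Integrable fun x => u x ^ 2) (hG : Integrable fun x => ‖fderiv ℝ u x‖ ^ 2)
    (hLap : Integrable fun x => lapl u x ^ 2) :
    ∫ x, u x * lapl u x = -∫ x, ‖fderiv ℝ u x‖ ^ 2 := by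
  have hlapl : Continuous (lapl u) := continuous_finsetSum _ fun i _ =>
    ((((hu.fderiv_right le_rfl).clm_apply contDiff_const).continuous_fderiv
      one_ne_zero).clm_apply continuous_const)
  have hgrad : Continuous (∇ u) :=
    (toDual ℝ _).symm.continuous.comp (hu.continuous_fderiv two_ne_zero)
  have hu₂ : MemLp u 2 := (memLp_two_iff_integrable_sq hu.continuous.aestronglyMeasurable).2 hL2
  have hlapl₂ : MemLp (lapl u) 2 :=
    (memLp_two_iff_integrable_sq hlapl.aestronglyMeasurable).2 hLap
  have hgrad₂ : MemLp (∇ u) 2 := by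
    refine (memLp_two_iff_integrable_sq_norm hgrad.aestronglyMeasurable).2 ?_
    simpa only [gradient, LinearIsometryEquiv.norm_map] using hG
  have hulapl : Integrable fun x => u x * lapl u x := hu₂.integrable_mul hlapl₂
  have hflux : Integrable fun x => u x • ∇ u x := memLp_one_iff_integrable.1 (hgrad₂.smul hu₂)
  have hdiv : ∫ x, (u x * lapl u x + ‖fderiv ℝ u x‖ ^ 2) = 0 :=
    integral_eq_zero_of_forall_integral_mul_eq_neg (hulapl.add hG) hflux
      fun φ hφ hφc => integral_mul_mul_lapl_add_norm_fderiv_sq hu hφ hφc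
  rw [integral_add hulapl hG] at hdiv
  linarith

end Laplacian

theorem lagrange_multiplier_vanishes_general {d : ℕ} (σ ω lam : ℝ) (hσ : 0 < σ)
    (u : EuclideanSpace ℝ (Fin d) → ℝ) (hC2 : ContDiff ℝ 2 u)
    (hL2 : Integrable (fun x => (u x) ^ 2))
    (hG : Integrable (fun x => ‖fderiv ℝ u x‖ ^ 2))
    (hLap : Integrable (fun x => (lapl u x) ^ 2))
    (hI : Integrable (fun x => |u x| ^ (2 * σ + 2)))
    (hIpos : 0 < ∫ x, |u x| ^ (2 * σ + 2))
    (hMpos : 0 < ∫ x, (u x) ^ 2)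
    (heq : ∀ x, -lapl u x + ω * u x - muR d σ ω u * |u x| ^ (2 * σ) * u x -
      (lam / 4) * (∫ y, |u y| ^ (2 * σ + 2)) ^ (1 / (σ + 1)) * u x = 0) :
    lam = 0 := by
  set c := lam / 4 * (∫ y, |u y| ^ (2 * σ + 2)) ^ (1 / (σ + 1))
  have hpow : ∀ x, |u x| ^ (2 * σ) * u x * u x = |u x| ^ (2 * σ + 2) := fun x => by
    rw [Real.rpow_add' (abs_nonneg _) (by positivity), mul_assoc, ← sq, ← sq_abs,
      Real.rpow_two]
  have hpt : ∀ x, u x * lapl u x =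
      ω * u x ^ 2 - muR d σ ω u * |u x| ^ (2 * σ + 2) - c * u x ^ 2 := fun x => by
    rw [← hpow]
    linear_combination -u x * heq x
  have hμ : muR d σ ω u * ∫ x, |u x| ^ (2 * σ + 2) =
      (∫ x, ‖fderiv ℝ u x‖ ^ 2) + ω * ∫ x, u x ^ 2 := div_mul_cancel₀ _ hIpos.ne'
  have hIBP := integral_mul_lapl_eq_neg_integral_norm_fderiv_sq hC2 hL2 hG hLap
  simp only [hpt] at hIBP
  rw [integral_sub (by exact (hL2.const_mul _).sub (hI.const_mul _)) (hL2.const_mul _),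
    integral_sub (hL2.const_mul _) (hI.const_mul _), integral_const_mul, integral_const_mul,
    integral_const_mul, hμ] at hIBP
  have hc : c * ∫ x, u x ^ 2 = 0 := by linarith
  have hc' := (mul_eq_zero.1 hc).resolve_right hMpos.ne'
  have := (mul_eq_zero.1 hc').resolve_right (Real.rpow_pos_of_pos hIpos _).ne'
  linarith

/-- vanishing of the Lagrange multiplier. -/
theorem lagrange_multiplier_vanishes {d : ℕ} (hd : 1 ≤ d) (σ ω lam : ℝ) (hσ : 0 < σ)
    (u : EuclideanSpace ℝ (Fin d) → ℝ) (hC2 : ContDiff ℝ 2 u)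
    (hL2 : Integrable (fun x => (u x) ^ 2))
    (hG : Integrable (fun x => ‖fderiv ℝ u x‖ ^ 2))
    (hLap : Integrable (fun x => (lapl u x) ^ 2))
    (hI : Integrable (fun x => |u x| ^ (2 * σ + 2)))
    (hIpos : 0 < ∫ x, |u x| ^ (2 * σ + 2))
    (hMpos : 0 < ∫ x, (u x) ^ 2)
    (heq : ∀ x, -lapl u x + ω * u x - muR d σ ω u * |u x| ^ (2 * σ) * u x -
      (lam / 4) * (∫ y, |u y| ^ (2 * σ + 2)) ^ (1 / (σ + 1)) * u x = 0) :
    lam = 0 :=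
  lagrange_multiplier_vanishes_general σ ω lam hσ u hC2 hL2 hG hLap hI hIpos hMpos heq
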